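/- arXiv:2402.08279 — 2 statements merged into one kernel-verified Lean document; each statement's English description precedes it below -/
import Mathlib

section
/- Let 𝔅 be a Boolean subspace lattice in a complex Banach space X. If K is an atom of 𝔅 and N ∈ Lat(Alg(𝔅)), then either K ⊆ N or N ⊆ K'. -/
open ContinuousLinearMap

/-- The closed linear span (join) of a family of subspaces. -/
noncomputable def cJoin {X : Type*} [NormedAddCommGroup X] [NormedSpace ℂ X]
    (S : Set (Submodule ℂ X)) : Submodule ℂ X :=
  (sSup S).topologicalClosure

/-- Join of two subspaces in the lattice of closed subspaces. -/
noncomputable def cJoin2 {X : Type*} [NormedAddCommGroup X] [NormedSpace ℂ X]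
    (M N : Submodule ℂ X) : Submodule ℂ X :=
  (M ⊔ N).topologicalClosure

/-- A subspace lattice: a complete lattice of closed subspaces containing the trivial ones. -/
def IsSubspaceLattice {X : Type*} [NormedAddCommGroup X] [NormedSpace ℂ X]
    (L : Set (Submodule ℂ X)) : Prop :=
  (∀ M ∈ L, IsClosed (M : Set X)) ∧ ⊥ ∈ L ∧ ⊤ ∈ L ∧
    ∀ S ⊆ L, cJoin S ∈ L ∧ sInf S ∈ L

/-- Alg(F): bounded operators leaving every member of F invariant. -/
def algOf {X : Type*} [NormedAddCommGroup X] [NormedSpace ℂ X]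
    (L : Set (Submodule ℂ X)) : Set (X →L[ℂ] X) :=
  {A | ∀ M ∈ L, ∀ x ∈ M, A x ∈ M}

/-- Lat(T): closed subspaces invariant under every operator in T. -/
def latOf {X : Type*} [NormedAddCommGroup X] [NormedSpace ℂ X]
    (T : Set (X →L[ℂ] X)) : Set (Submodule ℂ X) :=
  {M | IsClosed (M : Set X) ∧ ∀ A ∈ T, ∀ x ∈ M, A x ∈ M}

/-- The rank-one operator e ⊗ η : x ↦ η(x) • e. -/
noncomputable def rankOne {X : Type*} [NormedAddCommGroup X] [NormedSpace ℂ X]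
    (e : X) (η : X →L[ℂ] ℂ) : X →L[ℂ] X :=
  η.smulRight e

/-- The rank-one operators in a set of operators. -/
noncomputable def Rk1 {X : Type*} [NormedAddCommGroup X] [NormedSpace ℂ X]
    (T : Set (X →L[ℂ] X)) : Set (X →L[ℂ] X) :=
  {A ∈ T | ∃ (e : X) (η : X →L[ℂ] ℂ), e ≠ 0 ∧ η ≠ 0 ∧ A = rankOne e η}

/-- M₋ = ⋁{K ∈ L : M ⊄ K}. -/
noncomputable def mMinus {X : Type*} [NormedAddCommGroup X] [NormedSpace ℂ X]
    (L : Set (Submodule ℂ X)) (M : Submodule ℂ X) : Submodule ℂ X :=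
  cJoin {K | K ∈ L ∧ ¬ M ≤ K}

/-- M₊ = ⋀{K ∈ L : K ⊄ M}. -/
noncomputable def mPlus {X : Type*} [NormedAddCommGroup X] [NormedSpace ℂ X]
    (L : Set (Submodule ℂ X)) (M : Submodule ℂ X) : Submodule ℂ X :=
  sInf {K | K ∈ L ∧ ¬ K ≤ M}

/-- N_* = ⋀{M₋ : M ∈ L, M ⊄ N}. -/
noncomputable def nStar {X : Type*} [NormedAddCommGroup X] [NormedSpace ℂ X]
    (L : Set (Submodule ℂ X)) (N : Submodule ℂ X) : Submodule ℂ X :=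
  sInf {P | ∃ M, M ∈ L ∧ ¬ M ≤ N ∧ P = mMinus L M}

/-- The cyclic subspace [Alg(L)x]: closed linear span of the orbit of x under Alg(L). -/
noncomputable def cyclicSubspace {X : Type*} [NormedAddCommGroup X] [NormedSpace ℂ X]
    (L : Set (Submodule ℂ X)) (x : X) : Submodule ℂ X :=
  (Submodule.span ℂ ((fun A : X →L[ℂ] X => A x) '' algOf L)).topologicalClosure

/-- The pinch points of a family of subspaces. -/
def pinOf {X : Type*} [NormedAddCommGroup X] [NormedSpace ℂ X]
    (L : Set (Submodule ℂ X)) : Set (Submodule ℂ X) :=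
  {P | P ∈ L ∧ ∀ M ∈ L, M ≤ P ∨ P ≤ M}


/-- An atom of a subspace lattice: a nontrivial minimal element. -/
def IsLatAtom {X : Type*} [NormedAddCommGroup X] [NormedSpace ℂ X]
    (L : Set (Submodule ℂ X)) (K : Submodule ℂ X) : Prop :=
  K ∈ L ∧ K ≠ ⊥ ∧ K ≠ ⊤ ∧ ∀ B ∈ L, B ≤ K → B = ⊥ ∨ B = K

/-- A Boolean subspace lattice with complementation map `c`: distributive and
(uniquely) complemented. -/
def IsBooleanSubspaceLattice {X : Type*} [NormedAddCommGroup X] [NormedSpace ℂ X]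
    (L : Set (Submodule ℂ X)) (c : Submodule ℂ X → Submodule ℂ X) : Prop :=
  IsSubspaceLattice L ∧
  (∀ M ∈ L, ∀ N ∈ L, ∀ K ∈ L, M ⊓ cJoin2 N K = cJoin2 (M ⊓ N) (M ⊓ K)) ∧
  (∀ M ∈ L, ∀ N ∈ L, ∀ K ∈ L, cJoin2 M (N ⊓ K) = cJoin2 M N ⊓ cJoin2 M K) ∧
  (∀ M ∈ L, c M ∈ L ∧ M ⊓ c M = ⊥ ∧ cJoin2 M (c M) = ⊤) ∧
  (∀ M ∈ L, ∀ N ∈ L, M ⊓ N = ⊥ → cJoin2 M N = ⊤ → N = c M)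

/-- An atomic Boolean subspace lattice: every element is the join of the atoms below it. -/
def IsAtomicBooleanSubspaceLattice {X : Type*} [NormedAddCommGroup X] [NormedSpace ℂ X]
    (L : Set (Submodule ℂ X)) (c : Submodule ℂ X → Submodule ℂ X) : Prop :=
  IsBooleanSubspaceLattice L c ∧
  ∀ M ∈ L, M = cJoin {K | IsLatAtom L K ∧ K ≤ M}


/-
If N ⊄ K', Hahn–Banach gives x ∈ N and a functional η vanishing on the closed subspace K'
with η x = 1. Every member of 𝔅 either contains the atom K or meets it trivially, and then lies
in K' by distributivity; so for e ∈ K the rank-one operator e ⊗ η leaves every member of 𝔅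
invariant. Hence e = (e ⊗ η) x ∈ N.
-/

theorem Submodule.exists_dual_eq_one_of_notMem {𝕜 E : Type*} [RCLike 𝕜] [NormedAddCommGroup E]
    [NormedSpace 𝕜 E] (M : Submodule 𝕜 E) (hM : IsClosed (M : Set E)) {x : E} (hx : x ∉ M) :
    ∃ η : StrongDual 𝕜 E, η x = 1 ∧ ∀ y ∈ M, η y = 0 := by
  have hx0 : (M.mkQ x : E ⧸ M) ≠ 0 := by simpa [Submodule.Quotient.mk_eq_zero] using hx
  -- `hM` makes `E ⧸ M` a normed space, whose dual separates points
  obtain ⟨g, hg⟩ := SeparatingDual.exists_eq_one (R := 𝕜) hx0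
  let q : E →L[𝕜] E ⧸ M := ⟨M.mkQ, M.isOpenQuotientMap_mkQ.continuous⟩
  exact ⟨g.comp q, hg, fun y hy => by
    simp [q, (Submodule.Quotient.mk_eq_zero M).mpr hy]⟩

section SubspaceLattice

variable {X : Type*} [NormedAddCommGroup X] [NormedSpace ℂ X] {L : Set (Submodule ℂ X)}

theorem cJoin2_bot_left {M : Submodule ℂ X} (hM : IsClosed (M : Set X)) : cJoin2 ⊥ M = M := by
  rw [cJoin2, bot_sup_eq, hM.submodule_topologicalClosure_eq]

theorem IsSubspaceLattice.inf_mem (hL : IsSubspaceLattice L) {M N : Submodule ℂ X}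
    (hM : M ∈ L) (hN : N ∈ L) : M ⊓ N ∈ L := by
  have hpair : ({M, N} : Set (Submodule ℂ X)) ⊆ L :=
    Set.insert_subset hM (Set.singleton_subset_iff.mpr hN)
  simpa [sInf_pair] using (hL.2.2.2 _ hpair).2

theorem IsLatAtom.inf_eq_bot {K M : Submodule ℂ X} (hK : IsLatAtom L K) (hKM : K ⊓ M ∈ L)
    (hKnM : ¬ K ≤ M) : K ⊓ M = ⊥ :=
  (hK.2.2.2 _ hKM inf_le_left).resolve_right fun h => hKnM (inf_eq_left.mp h)

variable {c : Submodule ℂ X → Submodule ℂ X}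

theorem IsBooleanSubspaceLattice.le_compl_of_inf_eq_bot (hB : IsBooleanSubspaceLattice L c)
    {K M : Submodule ℂ X} (hK : K ∈ L) (hM : M ∈ L) (hMK : M ⊓ K = ⊥) : M ≤ c K := by
  obtain ⟨hL, hdist, -, hcompl, -⟩ := hB
  obtain ⟨hcK, -, hjoin⟩ := hcompl K hK
  have hclosed : IsClosed ((M ⊓ c K : Submodule ℂ X) : Set X) :=
    (hL.1 _ hM).inter (hL.1 _ hcK)
  have hM_eq : M = M ⊓ c K :=
    calc M = M ⊓ cJoin2 K (c K) := by rw [hjoin, inf_top_eq]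
      _ = cJoin2 (M ⊓ K) (M ⊓ c K) := hdist M hM K hK (c K) hcK
      _ = M ⊓ c K := by rw [hMK, cJoin2_bot_left hclosed]
  exact hM_eq ▸ inf_le_right

theorem IsBooleanSubspaceLattice.le_compl_of_atom (hB : IsBooleanSubspaceLattice L c)
    {K M : Submodule ℂ X} (hK : IsLatAtom L K) (hM : M ∈ L) (hKM : ¬ K ≤ M) : M ≤ c K := by
  refine hB.le_compl_of_inf_eq_bot hK.1 hM ?_
  rw [inf_comm]
  exact hK.inf_eq_bot (hB.1.inf_mem hK.1 hM) hKM

theorem rankOne_apply (e : X) (η : StrongDual ℂ X) (x : X) : rankOne e η x = η x • e := rfl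

theorem rankOne_mem_algOf {e : X} {η : StrongDual ℂ X}
    (h : ∀ M ∈ L, e ∈ M ∨ ∀ y ∈ M, η y = 0) : rankOne e η ∈ algOf L := by
  intro M hM y hy
  rw [rankOne_apply]
  rcases h M hM with he | hη
  · exact M.smul_mem _ he
  · rw [hη y hy, zero_smul]
    exact M.zero_mem

end SubspaceLattice

theorem atom_le_or_le_complement_general
    {X : Type*} [NormedAddCommGroup X] [NormedSpace ℂ X]
    (L : Set (Submodule ℂ X)) (c : Submodule ℂ X → Submodule ℂ X)
    (hB : IsBooleanSubspaceLattice L c)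
    (K : Submodule ℂ X) (hK : IsLatAtom L K)
    (N : Submodule ℂ X) (hN : N ∈ latOf (algOf L)) :
    K ≤ N ∨ N ≤ c K := by
  refine or_iff_not_imp_right.mpr fun hNK e he => ?_
  obtain ⟨x, hxN, hxK'⟩ := SetLike.not_le_iff_exists.mp hNK
  have hK'L : c K ∈ L := (hB.2.2.2.1 K hK.1).1
  obtain ⟨η, hηx, hηK'⟩ := (c K).exists_dual_eq_one_of_notMem (hB.1.1 _ hK'L) hxK'
  have hA : rankOne e η ∈ algOf L := rankOne_mem_algOf fun M hM =>
    (em (K ≤ M)).imp (fun hKM => hKM he)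
      fun hKM y hy => hηK' y (hB.le_compl_of_atom hK hM hKM hy)
  simpa [rankOne_apply, hηx] using hN.2 _ hA x hxN

/-- If K is an atom of a Boolean subspace lattice 𝔅 and N ∈ Lat(Alg(𝔅)), then
either K ⊆ N or N ⊆ K'. -/
theorem atom_le_or_le_complement
    {X : Type*} [NormedAddCommGroup X] [NormedSpace ℂ X] [CompleteSpace X]
    (L : Set (Submodule ℂ X)) (c : Submodule ℂ X → Submodule ℂ X)
    (hB : IsBooleanSubspaceLattice L c)
    (K : Submodule ℂ X) (hK : IsLatAtom L K)
    (N : Submodule ℂ X) (hN : N ∈ latOf (algOf L)) :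
    K ≤ N ∨ N ≤ c K :=
  atom_le_or_le_complement_general L c hB K hK N hN
end

section
/- Every atomic Boolean subspace lattice in a complex Banach space is reflexive: Lat(Alg(𝔅)) = 𝔅. -/
open ContinuousLinearMap

section Aux

variable {X : Type*} [NormedAddCommGroup X] [NormedSpace ℂ X]

lemma le_cJoin' {S : Set (Submodule ℂ X)} {M : Submodule ℂ X} (h : M ∈ S) : M ≤ cJoin S :=
  (le_sSup h).trans (Submodule.le_topologicalClosure _)

lemma cJoin_le' {S : Set (Submodule ℂ X)} {T : Submodule ℂ X} (hT : IsClosed (T : Set X))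
    (h : ∀ M ∈ S, M ≤ T) : cJoin S ≤ T :=
  Submodule.topologicalClosure_minimal _ (sSup_le h) hT

lemma cJoin2_eq (M N : Submodule ℂ X) : cJoin2 M N = cJoin {M, N} := by
  simp [cJoin, cJoin2, sSup_pair]

/-- Hahn-Banach: a continuous functional vanishing on a closed subspace and equal to 1
at a point outside it. -/
lemma exists_vanishing_functional {M : Submodule ℂ X} (hM : IsClosed (M : Set X))
    {x : X} (hx : x ∉ M) :
    ∃ η : X →L[ℂ] ℂ, η x = 1 ∧ ∀ y ∈ M, η y = 0 := by
  haveI : IsClosed (M : Set X) := hM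
  have hne : (Submodule.Quotient.mk x : X ⧸ M) ≠ 0 := by
    simpa [Submodule.Quotient.mk_eq_zero] using hx
  obtain ⟨f, hf⟩ := SeparatingDual.exists_eq_one (R := ℂ) hne
  have hcont : Continuous (M.mkQ) := continuous_quot_mk
  refine ⟨f.comp ⟨M.mkQ, hcont⟩, ?_, fun y hy => ?_⟩
  · simpa using hf
  · have : (Submodule.Quotient.mk y : X ⧸ M) = 0 := (Submodule.Quotient.mk_eq_zero M).2 hy
    simp [this]

end Aux

/-- Every atomic Boolean subspace lattice in a complex Banach space is reflexive. -/
theorem atomicBoolean_reflexive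
    {X : Type*} [NormedAddCommGroup X] [NormedSpace ℂ X] [CompleteSpace X]
    (L : Set (Submodule ℂ X)) (c : Submodule ℂ X → Submodule ℂ X)
    (hB : IsAtomicBooleanSubspaceLattice L c) :
    latOf (algOf L) = L := by
  obtain ⟨⟨⟨hcl, hbot, htop, hjoin⟩, hdist1, hdist2, hcomp, huniq⟩, hatomic⟩ := hB
  -- finite meets stay in L
  have hinf2 : ∀ M ∈ L, ∀ N ∈ L, M ⊓ N ∈ L := by
    intro M hM N hN
    have : sInf {M, N} ∈ L := (hjoin {M, N} (by intro K hK; rcases hK with h | h <;> subst h <;> assumption)).2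
    simpa [sInf_pair] using this
  -- disjointness implies below the complement
  have lemB : ∀ M ∈ L, ∀ N ∈ L, M ⊓ N = ⊥ → M ≤ c N := by
    intro M hM N hN h
    have h1 : M ⊓ cJoin2 N (c N) = cJoin2 (M ⊓ N) (M ⊓ c N) :=
      hdist1 M hM N hN (c N) (hcomp N hN).1
    have h2 : M = cJoin2 (M ⊓ N) (M ⊓ c N) := by
      rw [← h1, (hcomp N hN).2.2, inf_top_eq]
    rw [h2, h]
    rw [cJoin2, bot_sup_eq]
    exact Submodule.topologicalClosure_minimal _ inf_le_right (hcl _ (hcomp N hN).1)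
  apply Set.eq_of_subset_of_subset
  · intro N hN
    obtain ⟨hNcl, hNinv⟩ := hN
    -- Lemma A : for every atom K, either K ≤ N or N ≤ c K
    have lemA : ∀ K, IsLatAtom L K → K ≤ N ∨ N ≤ c K := by
      intro K hK
      by_cases hNc : N ≤ c K
      · exact Or.inr hNc
      · left
        obtain ⟨x, hxN, hxc⟩ := Set.not_subset.1 fun h => hNc h
        obtain ⟨η, hηx, hηc⟩ := exists_vanishing_functional (hcl _ (hcomp K hK.1).1) hxc
        intro e he
        have hA : rankOne e η ∈ algOf L := by
          intro M hM y hy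
          have hval : rankOne e η y = η y • e := rfl
          by_cases hKM : K ≤ M
          · rw [hval]; exact M.smul_mem _ (hKM he)
          · have hKMmem : K ⊓ M ∈ L := hinf2 K hK.1 M hM
            have := hK.2.2.2 (K ⊓ M) hKMmem inf_le_left
            rcases this with hb | hk
            · have hMcK : M ≤ c K := lemB M hM K hK.1 (by rwa [inf_comm])
              have : η y = 0 := hηc y (hMcK hy)
              rw [hval, this, zero_smul]; exact M.zero_mem
            · exact absurd (inf_eq_left.1 hk) hKM
        have := hNinv _ hA x hxN
        have hAx : rankOne e η x = e := by
          have : rankOne e η x = η x • e := rfl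
          rw [this, hηx, one_smul]
        rwa [hAx] at this
    -- P : closed join of atoms below N ; Q : closed join of the other atoms
    set S₁ : Set (Submodule ℂ X) := {K | IsLatAtom L K ∧ K ≤ N} with hS₁
    set S₂ : Set (Submodule ℂ X) := {K | IsLatAtom L K ∧ ¬ K ≤ N} with hS₂
    set P := cJoin S₁ with hP
    set Q := cJoin S₂ with hQ
    have hPL : P ∈ L := (hjoin S₁ fun K hK => hK.1.1).1
    have hQL : Q ∈ L := (hjoin S₂ fun K hK => hK.1.1).1
    have hPN : P ≤ N := cJoin_le' hNcl fun K hK => hK.2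
    -- cJoin2 P Q = ⊤
    have htopPQ : cJoin2 P Q = ⊤ := by
      refine le_antisymm le_top ?_
      have hT : (⊤ : Submodule ℂ X) = cJoin {K | IsLatAtom L K ∧ K ≤ ⊤} := hatomic ⊤ htop
      rw [hT]
      refine cJoin_le' (Submodule.isClosed_topologicalClosure _) fun K hK => ?_
      by_cases hKN : K ≤ N
      · exact le_trans (le_trans (le_cJoin' ⟨hK.1, hKN⟩ : K ≤ P) le_sup_left)
          (Submodule.le_topologicalClosure _)
      · exact le_trans (le_trans (le_cJoin' ⟨hK.1, hKN⟩ : K ≤ Q) le_sup_right)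
          (Submodule.le_topologicalClosure _)
    -- P ⊓ Q = ⊥
    have hQcP : Q ≤ c P := by
      refine cJoin_le' (hcl _ (hcomp P hPL).1) fun K hK => ?_
      have hKP : K ⊓ P = ⊥ := by
        have hKPmem : K ⊓ P ∈ L := hinf2 K hK.1.1 P hPL
        rcases hK.1.2.2.2 (K ⊓ P) hKPmem inf_le_left with hb | hk
        · exact hb
        · exact absurd (le_trans (inf_eq_left.1 hk) hPN) hK.2
      exact lemB K hK.1.1 P hPL hKP
    have hPQ : P ⊓ Q = ⊥ := by
      have : P ⊓ Q ≤ P ⊓ c P := inf_le_inf_left P hQcP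
      rw [(hcomp P hPL).2.1] at this
      exact le_bot_iff.1 this
    -- P = c Q
    have hPcQ : P = c Q := by
      refine huniq Q hQL P hPL (by rwa [inf_comm]) ?_
      rw [cJoin2, sup_comm]
      exact htopPQ
    -- N ≤ P
    have hNP : N ≤ P := by
      set R : Submodule ℂ X := sInf ((fun K => c K) '' S₂) with hR
      have hRL : R ∈ L := (hjoin _ (by rintro _ ⟨K, hK, rfl⟩; exact (hcomp K hK.1.1).1)).2
      have hNR : N ≤ R := by
        refine le_sInf ?_
        rintro _ ⟨K, hK, rfl⟩
        rcases lemA K hK.1 with h | h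
        · exact absurd h hK.2
        · exact h
      have hQcR : Q ≤ c R := by
        refine cJoin_le' (hcl _ (hcomp R hRL).1) fun K hK => ?_
        have hKR : K ⊓ R = ⊥ := by
          have hRcK : R ≤ c K := sInf_le ⟨K, hK, rfl⟩
          have : K ⊓ R ≤ K ⊓ c K := inf_le_inf_left K hRcK
          rw [(hcomp K hK.1.1).2.1] at this
          exact le_bot_iff.1 this
        exact lemB K hK.1.1 R hRL hKR
      have hRQ : R ⊓ Q = ⊥ := by
        have : R ⊓ Q ≤ R ⊓ c R := inf_le_inf_left R hQcR
        rw [(hcomp R hRL).2.1] at this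
        exact le_bot_iff.1 this
      have hRcQ : R ≤ c Q := lemB R hRL Q hQL hRQ
      rw [hPcQ]
      exact le_trans hNR hRcQ
    have : N = P := le_antisymm hNP hPN
    rw [this]
    exact hPL
  · intro M hM
    exact ⟨hcl M hM, fun A hA => hA M hM⟩
end
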